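/- (Concentration of the rescaled kernel, transition to the intermediate regime.) Extend V evenly to ℝ∖{0} by V(s) = (1/π)·|s|·coth(π|s|) − (1/π²)·log(2·sinh(π|s|)). Then for every bounded continuous function f : ℝ → ℝ, the limit as a → +∞ of ∫_ℝ a·V(a·x)·f(x) dx equals (1/(3π))·f(0); that is, the rescaled kernels a·V(a·) converge to (∫_{−∞}^∞ V)·δ₀ = (1/(3π))·δ₀. -/

import Mathlib

/-!
For `s > 0` and `q = e^{-2πs}` one has `V(s) = (2s/π)·q/(1-q) - log(1-q)/π²`, so `V` is the sum
of the nonnegative series `∑_{n ≥ 1} ((2/π)·s + 1/(π² n))·e^{-2πns}`. Integrating termwise,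
`∫_0^∞ V = ∑_{n ≥ 1} 1/(π³ n²) = ζ(2)/π³ = 1/(6π)`; since `V` is even it is integrable on `ℝ`
with `∫ V = 1/(3π)`. The substitution `y = a x` turns `∫ a V(a x) f(x) dx` into
`∫ V(y) f(y/a) dy`, which tends to `(∫ V)·f(0)` by dominated convergence with the dominating
function `|V|·‖f‖`.
-/

open Real Filter MeasureTheory

/-- The even extension to `ℝ∖{0}` of the wall-interaction energy
`V(s) = (1/π)·s·coth(πs) − (1/π²)·log(2·sinh(πs))` (`s > 0`). -/
noncomputable def Vext (s : ℝ) : ℝ :=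
  (1 / Real.pi) * |s| * (Real.cosh (Real.pi * |s|) / Real.sinh (Real.pi * |s|))
    - (1 / Real.pi ^ 2) * Real.log (2 * Real.sinh (Real.pi * |s|))

open Set Topology
open scoped BoundedContinuousFunction

section General

variable {α E : Type*} [MeasurableSpace α] {μ : Measure α} [NormedAddCommGroup E]

theorem integrable_of_hasSum_of_summable_integral_norm {F : ℕ → α → E} {f : α → E}
    (hF_int : ∀ n, Integrable (F n) μ) (hF_sum : Summable fun n ↦ ∫ a, ‖F n a‖ ∂μ)
    (hf : ∀ᵐ a ∂μ, HasSum (F · a) (f a)) : Integrable f μ := by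
  refine ⟨aestronglyMeasurable_of_tendsto_ae atTop
    (fun n ↦ Finset.aestronglyMeasurable_sum _ fun i _ ↦ (hF_int i).1)
    (hf.mono fun a ha ↦ by simpa only [Finset.sum_apply] using ha.tendsto_sum_nat), ?_⟩
  calc ∫⁻ a, ‖f a‖ₑ ∂μ ≤ ∫⁻ a, ∑' n, ‖F n a‖ₑ ∂μ :=
        lintegral_mono_ae <| hf.mono fun a ha ↦ ha.tsum_eq ▸ enorm_tsum_le_tsum_enorm
    _ = ∑' n, ENNReal.ofReal (∫ a, ‖F n a‖ ∂μ) := by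
        rw [lintegral_tsum fun n ↦ (hF_int n).1.enorm]
        simp only [ofReal_integral_norm_eq_lintegral_enorm (hF_int _)]
    _ = ENNReal.ofReal (∑' n, ∫ a, ‖F n a‖ ∂μ) :=
        (ENNReal.ofReal_tsum_of_nonneg (fun n ↦ integral_nonneg fun a ↦ norm_nonneg _) hF_sum).symm
    _ < ⊤ := ENNReal.ofReal_lt_top

theorem integrable_comp_abs {f : ℝ → E} (hf : IntegrableOn f (Ioi 0)) :
    Integrable fun x ↦ f |x| := by
  have h_Ioi : IntegrableOn (fun x ↦ f |x|) (Ioi 0) :=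
    hf.congr_fun (fun x hx ↦ by rw [abs_of_pos hx]) measurableSet_Ioi
  have h_Iic : IntegrableOn (fun x ↦ f |x|) (Iic 0) := by
    have h_neg : MeasurableEmbedding fun x : ℝ ↦ -x := (Homeomorph.neg ℝ).measurableEmbedding
    rw [← Measure.map_neg_eq_self (volume : Measure ℝ), h_neg.integrableOn_map_iff]
    simp only [Function.comp_def, abs_neg, neg_preimage, neg_Iic, neg_zero]
    exact (integrableOn_Ici_iff_integrableOn_Ioi (by simp)).mpr h_Ioi
  simpa [Iic_union_Ioi] using h_Iic.union h_Ioi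

variable [NormedSpace ℝ E]

theorem tendsto_integral_mul_comp_mul_smul_atTop [CompleteSpace E] {K : ℝ → ℝ} (hK : Integrable K)
    (f : ℝ →ᵇ E) :
    Tendsto (fun a : ℝ ↦ ∫ x, (a * K (a * x)) • f x) atTop (𝓝 ((∫ x, K x) • f 0)) := by
  have h_rescaled : Tendsto (fun a : ℝ ↦ ∫ y, K y • f (a⁻¹ * y)) atTop
      (𝓝 (∫ y, K y • f 0)) := by
    refine tendsto_integral_filter_of_dominated_convergence (fun y ↦ ‖K y‖ * ‖f‖)
      (.of_forall fun a ↦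
        hK.1.smul (f.continuous.comp (continuous_const_mul _)).aestronglyMeasurable)
      (.of_forall fun a ↦ .of_forall fun y ↦ ?_) (hK.norm.mul_const _) (.of_forall fun y ↦ ?_)
    · rw [norm_smul]
      exact mul_le_mul_of_nonneg_left (f.norm_coe_le_norm _) (norm_nonneg _)
    · have : Tendsto (fun a : ℝ ↦ a⁻¹ * y) atTop (𝓝 0) := by
        simpa using tendsto_inv_atTop_zero.mul_const y
      exact (f.continuous.tendsto 0 |>.comp this).const_smul (K y)
  rw [integral_smul_const] at h_rescaled
  refine h_rescaled.congr' ((eventually_gt_atTop 0).mono fun a ha ↦ ?_)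
  have h_subst := Measure.integral_comp_mul_left (fun y ↦ K y • f (a⁻¹ * y)) a
  simp only [inv_mul_cancel_left₀ ha.ne', abs_inv, abs_of_pos ha] at h_subst
  simp_rw [mul_smul, integral_smul, h_subst, smul_inv_smul₀ ha.ne']

end General

theorem integral_pow_mul_exp_neg_mul_Ioi (k : ℕ) {c : ℝ} (hc : 0 < c) :
    ∫ s in Ioi (0 : ℝ), s ^ k * exp (-(c * s)) = k.factorial / c ^ (k + 1) := by
  have h := integral_rpow_mul_exp_neg_mul_Ioi (a := k + 1) (by positivity) hc
  rw [add_sub_cancel_right, Gamma_nat_eq_factorial, ← Nat.cast_add_one, Real.rpow_natCast] at h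
  simp_rw [Real.rpow_natCast] at h
  rw [h, one_div, inv_pow, inv_mul_eq_div]

theorem integrableOn_pow_mul_exp_neg_mul_Ioi (k : ℕ) {c : ℝ} (hc : 0 < c) :
    IntegrableOn (fun s ↦ s ^ k * exp (-(c * s))) (Ioi 0) := by
  simpa [Real.rpow_natCast] using
    integrableOn_rpow_mul_exp_neg_mul_rpow (s := k) (by linarith [k.cast_nonneg (α := ℝ)])
      zero_lt_one hc

theorem Vext_abs (s : ℝ) : Vext |s| = Vext s := by
  simp only [Vext, abs_abs]

theorem Vext_eq_of_pos {s : ℝ} (hs : 0 < s) :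
    Vext s = 2 * s / π * (exp (-(2 * π * s)) / (1 - exp (-(2 * π * s))))
      - log (1 - exp (-(2 * π * s))) / π ^ 2 := by
  set e := exp (π * s) with he
  have he1 : 1 < e := one_lt_exp_iff.mpr (by positivity)
  have hq : exp (-(2 * π * s)) = 1 / e ^ 2 := by
    rw [he, ← exp_nat_mul, one_div, ← exp_neg]; congr 1; push_cast; ring
  have hsinh : 2 * sinh (π * s) = e * (1 - 1 / e ^ 2) := by
    rw [sinh_eq, exp_neg, ← he]; field_simp
  have hlog : log (2 * sinh (π * s)) = π * s + log (1 - 1 / e ^ 2) := by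
    have : 0 < 1 - 1 / e ^ 2 := by
      rw [sub_pos, div_lt_one (by positivity)]; nlinarith
    rw [hsinh, log_mul (by positivity) this.ne', he, log_exp]
  have hcoth : cosh (π * s) / sinh (π * s) = (e ^ 2 + 1) / (e ^ 2 - 1) := by
    rw [cosh_eq, sinh_eq, exp_neg, ← he]
    have : e ^ 2 - 1 ≠ 0 := by nlinarith
    field_simp
  rw [Vext, abs_of_pos hs, hlog, hcoth, hq]
  have : e ^ 2 - 1 ≠ 0 := by nlinarith
  field_simp
  ring

noncomputable def VextTerm (n : ℕ) (s : ℝ) : ℝ :=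
  2 / π * (s * exp (-(2 * π * (n + 1) * s))) + 1 / (π ^ 2 * (n + 1)) * exp (-(2 * π * (n + 1) * s))

theorem VextTerm_nonneg (n : ℕ) {s : ℝ} (hs : 0 ≤ s) : 0 ≤ VextTerm n s := by
  unfold VextTerm
  positivity

theorem hasSum_VextTerm {s : ℝ} (hs : 0 < s) : HasSum (VextTerm · s) (Vext s) := by
  set q := exp (-(2 * π * s)) with hq
  have hq0 : 0 < q := exp_pos _
  have hq1 : q < 1 := exp_lt_one_iff.mpr (by simp only [neg_neg_iff_pos]; positivity)
  have h_geom : HasSum (fun n : ℕ ↦ q ^ (n + 1)) (q / (1 - q)) := by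
    simpa only [pow_succ', div_eq_mul_inv] using (hasSum_geometric_of_lt_one hq0.le hq1).mul_left q
  have h_log := hasSum_pow_div_log_of_abs_lt_one (abs_lt.mpr ⟨by linarith, hq1⟩)
  have h_terms : (VextTerm · s) =
      fun n : ℕ ↦ 2 * s / π * q ^ (n + 1) + 1 / π ^ 2 * (q ^ (n + 1) / (n + 1)) := by
    funext n
    rw [VextTerm, hq, ← exp_nat_mul]
    push_cast
    field_simp
  have h_val : Vext s = 2 * s / π * (q / (1 - q)) + 1 / π ^ 2 * -log (1 - q) := by
    rw [Vext_eq_of_pos hs]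
    ring
  rw [h_terms, h_val]
  exact (h_geom.mul_left _).add (h_log.mul_left _)

theorem integrableOn_VextTerm (n : ℕ) : IntegrableOn (VextTerm n) (Ioi 0) := by
  have hc : 0 < 2 * π * (n + 1) := by positivity
  have h₀ := integrableOn_pow_mul_exp_neg_mul_Ioi 0 hc
  have h₁ := integrableOn_pow_mul_exp_neg_mul_Ioi 1 hc
  simp only [pow_zero, pow_one, one_mul] at h₀ h₁
  exact (h₁.const_mul _).add (h₀.const_mul _)

theorem integral_VextTerm (n : ℕ) :
    ∫ s in Ioi 0, VextTerm n s = 1 / (π ^ 3 * (n + 1) ^ 2) := by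
  have hc : 0 < 2 * π * (n + 1) := by positivity
  have h₀ := integral_pow_mul_exp_neg_mul_Ioi 0 hc
  have h₁ := integral_pow_mul_exp_neg_mul_Ioi 1 hc
  have h₀' := integrableOn_pow_mul_exp_neg_mul_Ioi 0 hc
  have h₁' := integrableOn_pow_mul_exp_neg_mul_Ioi 1 hc
  simp only [pow_zero, pow_one, one_mul, Nat.factorial, Nat.cast_one] at h₀ h₁ h₀' h₁'
  simp only [VextTerm]
  rw [integral_add (h₁'.const_mul _) (h₀'.const_mul _), integral_const_mul, integral_const_mul,
    h₀, h₁]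
  field_simp
  ring

theorem hasSum_one_div_pi_cube_mul_sq :
    HasSum (fun n : ℕ ↦ 1 / (π ^ 3 * (n + 1) ^ 2)) (1 / (6 * π)) := by
  have h_zeta : HasSum (fun n : ℕ ↦ 1 / ((n : ℝ) + 1) ^ 2) (π ^ 2 / 6) := by
    simpa using (hasSum_nat_add_iff' 1).mpr hasSum_zeta_two
  have h_terms : (fun n : ℕ ↦ 1 / (π ^ 3 * (n + 1) ^ 2)) =
      fun n : ℕ ↦ 1 / π ^ 3 * (1 / ((n : ℝ) + 1) ^ 2) := by
    funext n
    rw [one_div_mul_one_div]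
  rw [h_terms, show 1 / (6 * π) = 1 / π ^ 3 * (π ^ 2 / 6) by field_simp]
  exact h_zeta.mul_left _

theorem summable_integral_norm_VextTerm :
    Summable fun n ↦ ∫ s in Ioi 0, ‖VextTerm n s‖ := by
  refine hasSum_one_div_pi_cube_mul_sq.summable.congr fun n ↦ ?_
  rw [← integral_VextTerm]
  exact setIntegral_congr_fun measurableSet_Ioi fun s hs ↦
    (Real.norm_of_nonneg (VextTerm_nonneg n (le_of_lt hs))).symm

theorem ae_hasSum_VextTerm_Ioi : ∀ᵐ s ∂volume.restrict (Ioi 0), HasSum (VextTerm · s) (Vext s) :=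
  (ae_restrict_mem measurableSet_Ioi).mono fun _ hs ↦ hasSum_VextTerm hs

theorem integrable_Vext : Integrable Vext := by
  have h_Ioi : IntegrableOn Vext (Ioi 0) :=
    integrable_of_hasSum_of_summable_integral_norm integrableOn_VextTerm
      summable_integral_norm_VextTerm ae_hasSum_VextTerm_Ioi
  simpa only [Vext_abs] using integrable_comp_abs h_Ioi

theorem integral_Vext : ∫ s, Vext s = 1 / (3 * π) := by
  have h_Ioi : ∫ s in Ioi 0, Vext s = 1 / (6 * π) := by
    have h := hasSum_integral_of_summable_integral_norm integrableOn_VextTerm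
      summable_integral_norm_VextTerm
    rw [integral_congr_ae (ae_hasSum_VextTerm_Ioi.mono fun _ hs ↦ hs.tsum_eq)] at h
    simp only [integral_VextTerm] at h
    exact h.unique hasSum_one_div_pi_cube_mul_sq
  calc ∫ s, Vext s = ∫ s, Vext |s| := by simp only [Vext_abs]
    _ = 2 * ∫ s in Ioi 0, Vext s := integral_comp_abs
    _ = 1 / (3 * π) := by rw [h_Ioi]; field_simp; ring

/-- (Concentration of the rescaled kernel, transition to the intermediate regime.)
For every bounded continuous `f : ℝ → ℝ`,
`∫_ℝ a·V(ax)·f(x) dx → (1/(3π))·f(0)` as `a → +∞`; that is, the rescaled kernels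
`a·V(a·)` converge to `(∫_{−∞}^∞ V)·δ₀ = (1/(3π))·δ₀`. -/
theorem stmt17 (f : BoundedContinuousFunction ℝ ℝ) :
    Tendsto (fun a : ℝ => ∫ x : ℝ, a * Vext (a * x) * f x) atTop
      (nhds ((1 / (3 * Real.pi)) * f 0)) := by
  simpa only [smul_eq_mul, integral_Vext] using
    tendsto_integral_mul_comp_mul_smul_atTop integrable_Vext f
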